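/- Let 1 ≤ i ≤ s, write ξ_i = (k,t), and let p > k be such that the elements of M in column t are exactly {(j,t) : p ≤ j ≤ n}. If (b,c) ∈ B_i with k < b < p and t < c < k, then (c,t) ∉ B_{i−1}. -/

import Mathlib

/-!
Every `B_j` is closed under `(x,y), (y,z) ↦ (x,z)` outside `M`. This holds for `A \ M`, and a
step preserves it: if removing `ξ = (k,t)`, a `−` place `(k,a)` or a `+` place `(a,t)` broke the
closure, then either one of the two factors would have received a sign at the same step, or
(via closure of `B_{j-1}`) a factor lies in `M` and the ideal property puts `ξ` into `M`.
Hence `(b,c), (c,t) ∈ B_{i-1}` with `(b,t) ∉ M` give `(b,t) ∈ B_{i-1}`; but `(b,t)` lies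
below `ξ_i = (k,t)` in its column, so it is `≻`-greater, contradicting the choice of `ξ_i`.
-/

open Finset MvPolynomial

namespace Panov

/-- The set `A` of places `(i,j)` with `n ≥ i > j ≥ 1`. -/
def placesA (n : ℕ) : Finset (ℕ × ℕ) :=
  (Finset.range (n + 1) ×ˢ Finset.range (n + 1)).filter fun p => 1 ≤ p.2 ∧ p.2 < p.1

/-- The rank of a place in the linear order `≻`:
`η ≻ ζ` iff `ordA n η < ordA n ζ`. -/
def ordA (n : ℕ) (p : ℕ × ℕ) : ℕ := p.2 * (n + 1) + (n - p.1)

/-- The `≻`-greatest element of a (nonempty) set `B` of places: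
the element with the minimal value of `ordA`. -/
def xiOf (n : ℕ) (B : Finset (ℕ × ℕ)) : ℕ × ℕ :=
  let m := WithTop.untopD 0 ((B.image (ordA n)).min)
  (n - m % (n + 1), m / (n + 1))

/-- The places that get the symbol `−` at the current step, when the
current set of unfilled places is `B`. -/
def minusSet (n : ℕ) (B : Finset (ℕ × ℕ)) : Finset (ℕ × ℕ) :=
  B.filter fun p =>
    p.1 = (xiOf n B).1 ∧ (xiOf n B).2 < p.2 ∧ p.2 < (xiOf n B).1 ∧ (p.2, (xiOf n B).2) ∈ B

/-- The places that get the symbol `+` at the current step. -/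
def plusSet (n : ℕ) (B : Finset (ℕ × ℕ)) : Finset (ℕ × ℕ) :=
  B.filter fun p =>
    p.2 = (xiOf n B).2 ∧ (xiOf n B).2 < p.1 ∧ p.1 < (xiOf n B).1 ∧ ((xiOf n B).1, p.1) ∈ B

/-- `Bset n M i` is the set of places unfilled after step `i` of the diagram. -/
def Bset (n : ℕ) (M : Finset (ℕ × ℕ)) : ℕ → Finset (ℕ × ℕ)
  | 0 => placesA n \ M
  | i + 1 =>
      Bset n M i \
        insert (xiOf n (Bset n M i)) (minusSet n (Bset n M i) ∪ plusSet n (Bset n M i))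

/-- `ξ_i`, the place that receives `⊗` at step `i ≥ 1`. -/
def xiStep (n : ℕ) (M : Finset (ℕ × ℕ)) (i : ℕ) : ℕ × ℕ := xiOf n (Bset n M (i - 1))

/-- `C_i⁻`, the places filled with `−` at step `i ≥ 1`. -/
def Cminus (n : ℕ) (M : Finset (ℕ × ℕ)) (i : ℕ) : Finset (ℕ × ℕ) :=
  minusSet n (Bset n M (i - 1))

/-- `C_i⁺`, the places filled with `+` at step `i ≥ 1`. -/
def Cplus (n : ℕ) (M : Finset (ℕ × ℕ)) (i : ℕ) : Finset (ℕ × ℕ) :=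
  plusSet n (Bset n M (i - 1))

/-- `M ⊆ A` spans an ideal `𝔪` of `𝔫 = ut(n,K)`. -/
def IsIdealSet (n : ℕ) (M : Finset (ℕ × ℕ)) : Prop :=
  M ⊆ placesA n ∧
    (∀ p ∈ M, ∀ d, 1 ≤ d → d < p.2 → (p.1, d) ∈ M) ∧
    (∀ p ∈ M, ∀ c, p.1 < c → c ≤ n → (c, p.2) ∈ M)

/-- `s` is the number of steps after which the diagram is complete. -/
def IsNumSteps (n : ℕ) (M : Finset (ℕ × ℕ)) (s : ℕ) : Prop :=
  Bset n M s = ∅ ∧ ∀ j < s, (Bset n M j).Nonempty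

lemma mem_placesA {n : ℕ} {q : ℕ × ℕ} : q ∈ placesA n ↔ q.1 ≤ n ∧ 1 ≤ q.2 ∧ q.2 < q.1 := by
  simp only [placesA, mem_filter, mem_product, mem_range]
  constructor
  · rintro ⟨⟨hq₁, -⟩, h⟩
    exact ⟨by omega, h⟩
  · rintro ⟨hq₁, h⟩
    exact ⟨⟨by omega, by omega⟩, h⟩

lemma placesA_trans {n x y z : ℕ} (hxy : (x, y) ∈ placesA n) (hyz : (y, z) ∈ placesA n) :
    (x, z) ∈ placesA n := by
  rw [mem_placesA] at *
  exact ⟨hxy.1, hyz.2.1, by omega⟩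

lemma xiOf_eq_of_forall_ordA_le {n : ℕ} {B : Finset (ℕ × ℕ)} {q : ℕ × ℕ} (hq : q ∈ B)
    (hqn : q.1 ≤ n) (hmin : ∀ r ∈ B, ordA n q ≤ ordA n r) : xiOf n B = q := by
  have hmin_image : (B.image (ordA n)).min = WithTop.some (ordA n q) :=
    le_antisymm (min_le (mem_image_of_mem _ hq))
      (Finset.le_min fun _ hm => by
        obtain ⟨r, hr, rfl⟩ := mem_image.1 hm
        exact WithTop.coe_le_coe.2 (hmin r hr))
  have hmod : ordA n q % (n + 1) = n - q.1 := by
    rw [ordA, Nat.add_comm, Nat.add_mul_mod_self_right, Nat.mod_eq_of_lt (by omega)]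
  have hdiv : ordA n q / (n + 1) = q.2 := by
    rw [ordA, Nat.add_comm, Nat.add_mul_div_right _ _ n.succ_pos,
      Nat.div_eq_of_lt (by omega), zero_add]
  simp only [xiOf, hmin_image, WithTop.untopD_coe, hmod, hdiv]
  exact Prod.ext (by dsimp only; omega) rfl

lemma exists_xiOf_eq {n : ℕ} {B : Finset (ℕ × ℕ)} (hB : B ⊆ placesA n) (hne : B.Nonempty) :
    ∃ q ∈ B, (∀ r ∈ B, ordA n q ≤ ordA n r) ∧ xiOf n B = q := by
  obtain ⟨q, hq, hmin⟩ := B.exists_min_image (ordA n) hne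
  exact ⟨q, hq, hmin, xiOf_eq_of_forall_ordA_le hq (mem_placesA.1 (hB hq)).1 hmin⟩

lemma xiOf_mem {n : ℕ} {B : Finset (ℕ × ℕ)} (hB : B ⊆ placesA n) (hne : B.Nonempty) :
    xiOf n B ∈ B := by
  obtain ⟨q, hq, -, hξ⟩ := exists_xiOf_eq hB hne
  rwa [hξ]

lemma ordA_xiOf_le {n : ℕ} {B : Finset (ℕ × ℕ)} (hB : B ⊆ placesA n) {r : ℕ × ℕ} (hr : r ∈ B) :
    ordA n (xiOf n B) ≤ ordA n r := by
  obtain ⟨q, -, hmin, hξ⟩ := exists_xiOf_eq hB ⟨r, hr⟩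
  rw [hξ]
  exact hmin r hr

lemma ordA_lt_of_fst_lt {n k b t : ℕ} (hkb : k < b) (hbn : b ≤ n) :
    ordA n (b, t) < ordA n (k, t) := by
  simp only [ordA]
  omega

lemma Bset_antitone (n : ℕ) (M : Finset (ℕ × ℕ)) : Antitone (Bset n M) :=
  antitone_nat_of_succ_le fun _ => sdiff_subset

lemma Bset_subset_placesA_sdiff (n : ℕ) (M : Finset (ℕ × ℕ)) (j : ℕ) :
    Bset n M j ⊆ placesA n \ M :=
  Bset_antitone n M j.zero_le

def TransClosedOutside (M B : Finset (ℕ × ℕ)) : Prop :=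
  ∀ ⦃x y z : ℕ⦄, (x, y) ∈ B → (y, z) ∈ B → (x, z) ∉ M → (x, z) ∈ B

lemma transClosedOutside_placesA_sdiff (n : ℕ) (M : Finset (ℕ × ℕ)) :
    TransClosedOutside M (placesA n \ M) := fun _ _ _ hxy hyz hxz =>
  mem_sdiff.2 ⟨placesA_trans (mem_sdiff.1 hxy).1 (mem_sdiff.1 hyz).1, hxz⟩

lemma TransClosedOutside.sdiff_step {n : ℕ} {M B : Finset (ℕ × ℕ)} (hM : IsIdealSet n M)
    (hBA : B ⊆ placesA n \ M) (hB : TransClosedOutside M B) :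
    TransClosedOutside M (B \ insert (xiOf n B) (minusSet n B ∪ plusSet n B)) := by
  intro x y z hxy hyz hxz
  have hBA' : B ⊆ placesA n := hBA.trans sdiff_subset
  have hξB : xiOf n B ∈ B := xiOf_mem hBA' ⟨_, mem_sdiff.1 hxy |>.1⟩
  simp only [minusSet, plusSet, mem_sdiff, mem_insert, mem_union, mem_filter, not_or]
    at hxy hyz ⊢
  obtain ⟨⟨k, t⟩, hξ⟩ : ∃ ξ, xiOf n B = ξ := ⟨_, rfl⟩
  rw [hξ] at hξB hxy hyz ⊢
  obtain ⟨hxy, -, hxy_minus, -⟩ := hxy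
  obtain ⟨hyz, -, -, hyz_plus⟩ := hyz
  have hξM : (k, t) ∉ M := (mem_sdiff.1 (hBA hξB)).2
  obtain ⟨-, ht, -⟩ := mem_placesA.1 (hBA' hξB)
  obtain ⟨hxn, -, hyx⟩ := mem_placesA.1 (hBA' hxy)
  obtain ⟨-, -, hzy⟩ := mem_placesA.1 (hBA' hyz)
  dsimp only at hxy_minus hyz_plus hxn hyx hzy ⊢
  refine ⟨hB hxy hyz hxz, ?_, ?_, ?_⟩
  · rintro ⟨rfl, rfl⟩
    exact hxy_minus ⟨hxy, rfl, hzy, hyx, hyz⟩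
  · rintro ⟨-, rfl, htz, -, hzt⟩
    by_cases hyt : (y, t) ∈ B
    · exact hxy_minus ⟨hxy, rfl, by omega, hyx, hyt⟩
    · have hytM : (y, t) ∈ M := by_contra fun h => hyt (hB hyz hzt h)
      exact hξM (hM.2.2 _ hytM x hyx hxn)
  · rintro ⟨-, rfl, htx, hxk, hkx⟩
    by_cases hky : (k, y) ∈ B
    · exact hyz_plus ⟨hyz, rfl, hzy, by omega, hky⟩
    · have hkyM : (k, y) ∈ M := by_contra fun h => hky (hB hkx hxy h)
      exact hξM (hM.2.1 _ hkyM z ht (by omega))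

lemma transClosedOutside_Bset {n : ℕ} {M : Finset (ℕ × ℕ)} (hM : IsIdealSet n M) (j : ℕ) :
    TransClosedOutside M (Bset n M j) := by
  induction j with
  | zero => exact transClosedOutside_placesA_sdiff n M
  | succ j ih => exact ih.sdiff_step hM (Bset_subset_placesA_sdiff n M j)

theorem case2_column_filled_general
    (n : ℕ) (M : Finset (ℕ × ℕ))
    (hM : IsIdealSet n M)
    (i k t p : ℕ)
    (hkt : xiStep n M i = (k, t))
    (hMp : ∀ j, (j, t) ∈ M ↔ p ≤ j ∧ j ≤ n)
    (b c : ℕ) (hbc : (b, c) ∈ Bset n M i)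
    (hkb : k < b) (hbp : b < p) :
    (c, t) ∉ Bset n M (i - 1) := by
  intro hct
  have hBA : Bset n M (i - 1) ⊆ placesA n :=
    (Bset_subset_placesA_sdiff n M _).trans sdiff_subset
  have hbc' : (b, c) ∈ Bset n M (i - 1) := Bset_antitone n M (i.sub_le 1) hbc
  have hbt : (b, t) ∈ Bset n M (i - 1) :=
    transClosedOutside_Bset hM _ hbc' hct fun h => by have := (hMp b).1 h; omega
  have hle := ordA_xiOf_le hBA hbt
  rw [← xiStep, hkt] at hle
  exact (ordA_lt_of_fst_lt hkb (mem_placesA.1 (hBA hbt)).1).not_ge hle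

/-- If `(b,c) ∈ B_i` with `k < b < p` and `t < c < k` (where `ξ_i = (k,t)` and
the elements of `M` in column `t` are exactly `{(j,t) : p ≤ j ≤ n}`), then
`(c,t) ∉ B_{i−1}`. -/
theorem case2_column_filled (K : Type*) [Field K] [CharZero K]
    (n s : ℕ) (hn : 2 ≤ n) (M : Finset (ℕ × ℕ))
    (hM : IsIdealSet n M) (hs : IsNumSteps n M s)
    (i k t p : ℕ) (hi1 : 1 ≤ i) (his : i ≤ s)
    (hkt : xiStep n M i = (k, t)) (hkp : k < p)
    (hMp : ∀ j, (j, t) ∈ M ↔ p ≤ j ∧ j ≤ n)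
    (b c : ℕ) (hbc : (b, c) ∈ Bset n M i)
    (hkb : k < b) (hbp : b < p) (htc : t < c) (hck : c < k) :
    (c, t) ∉ Bset n M (i - 1) :=
  case2_column_filled_general n M hM i k t p hkt hMp b c hbc hkb hbp
end Panov
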